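/- arXiv:1506.04418 — 4 statements merged into one kernel-verified Lean document; each statement's English description precedes it below -/
import Mathlib

section
/- Let β ≥ 0 and let z ∈ L^∞(ℝ) be nonnegative. Define A_z : ℝ → ℝ by A_z(x) = ∫_ℝ J(x−y)( z(x)·z(y)^β − (β/(β+1))·z(y)^{β+1} − (1/(β+1))·z(x)^{β+1} ) dy. Then A_z(x) ≤ 0 for every x ∈ ℝ, and for every bounded continuous function w : ℝ → ℝ that attains its global maximum at a point x₀ ∈ ℝ, one has z(x₀)·L(z^β w)(x₀) − (β/(β+1))·w(x₀)·L(z^{β+1})(x₀) ≤ A_z(x₀)·w(x₀). -/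
open MeasureTheory Filter

/-- The nonlocal operator `(Lu)(x) = ∫ J(x-y) (u(y) - u(x)) dy`. -/
noncomputable def nlOp (J u : ℝ → ℝ) (x : ℝ) : ℝ := ∫ y, J (x - y) * (u y - u x)

/-- The function `A_z` associated to the kernel `J`, the function `z` and the exponent `β`. -/
noncomputable def Az (J z : ℝ → ℝ) (β : ℝ) (x : ℝ) : ℝ :=
  ∫ y, J (x - y) *
    (z x * z y ^ β - (β / (β + 1)) * z y ^ (β + 1) - (1 / (β + 1)) * z x ^ (β + 1))

/-! The integrand of `A_z` is nonpositive by the weighted AM-GM (Young) inequality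
`a b^β ≤ a^(β+1)/(β+1) + β b^(β+1)/(β+1)`. At a maximum point `x₀` of `w`, the integrand
of the left-hand side differs from that of `A_z(x₀) w(x₀)` by `J(x₀-y) z(x₀) z(y)^β (w(y) - w(x₀)) ≤ 0`; the terms in `z(x₀)^(β+1) w(x₀)`
cancel because `β/(β+1) + 1/(β+1) = 1`. -/

open scoped ENNReal

lemma Real.mul_rpow_le_weighted_add {β a b : ℝ} (hβ : 0 ≤ β) (ha : 0 ≤ a) (hb : 0 ≤ b) :
    a * b ^ β ≤ β / (β + 1) * b ^ (β + 1) + 1 / (β + 1) * a ^ (β + 1) := by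
  have hβ1 : β + 1 ≠ 0 := by positivity
  have h := Real.geom_mean_le_arith_mean2_weighted (by positivity : 0 ≤ 1 / (β + 1))
    (by positivity : 0 ≤ β / (β + 1)) (Real.rpow_nonneg ha (β + 1))
    (Real.rpow_nonneg hb (β + 1)) (by field_simp; ring)
  rwa [← Real.rpow_mul ha, ← Real.rpow_mul hb, mul_one_div_cancel hβ1, mul_div_cancel₀ _ hβ1,
    Real.rpow_one, add_comm] at h

lemma Az_nonpos {J z : ℝ → ℝ} {β : ℝ} (hJ : ∀ x, 0 ≤ J x) (hβ : 0 ≤ β) (hz : ∀ x, 0 ≤ z x)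
    (x : ℝ) : Az J z β x ≤ 0 :=
  integral_nonpos fun y => mul_nonpos_of_nonneg_of_nonpos (hJ _)
    (by linarith [Real.mul_rpow_le_weighted_add hβ (hz x) (hz y)])

lemma mul_sub_sub_le_mul_of_le {β a b u v : ℝ} (hβ : 0 ≤ β) (ha : 0 ≤ a) (hb : 0 ≤ b)
    (huv : u ≤ v) :
    a * (b ^ β * u - a ^ β * v) - β / (β + 1) * v * (b ^ (β + 1) - a ^ (β + 1))
      ≤ (a * b ^ β - β / (β + 1) * b ^ (β + 1) - 1 / (β + 1) * a ^ (β + 1)) * v := by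
  have hβ1 : β + 1 ≠ 0 := by positivity
  have hdiff : a * (b ^ β * u - a ^ β * v) - β / (β + 1) * v * (b ^ (β + 1) - a ^ (β + 1))
      - (a * b ^ β - β / (β + 1) * b ^ (β + 1) - 1 / (β + 1) * a ^ (β + 1)) * v
      = a * b ^ β * (u - v) := by
    rw [Real.rpow_add_one' ha hβ1]
    field_simp
    ring
  linarith [mul_nonpos_of_nonneg_of_nonpos (mul_nonneg ha (Real.rpow_nonneg hb β))
    (sub_nonpos.2 huv)]

lemma integrable_kernel_mul {J h : ℝ → ℝ} (hJ : Integrable J) (hh : MemLp h ∞) (x : ℝ) :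
    Integrable fun y => J (x - y) * h y :=
  (hJ.comp_sub_left x).mul_of_top_left hh

lemma memLp_top_rpow {α : Type*} [MeasurableSpace α] {μ : Measure α} {z : α → ℝ} {p C : ℝ}
    (hz : Measurable z) (hz0 : ∀ x, 0 ≤ z x) (hzC : ∀ x, z x ≤ C) (hp : 0 ≤ p) :
    MemLp (fun x => z x ^ p) ∞ μ :=
  memLp_top_of_bound ((Real.continuous_rpow_const hp).measurable.comp hz).aestronglyMeasurable
    (C ^ p) <| Eventually.of_forall fun x => by
      rw [Real.norm_of_nonneg (Real.rpow_nonneg (hz0 x) p)]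
      exact Real.rpow_le_rpow (hz0 x) (hzC x) hp

lemma mul_nlOp_sub_le_Az_mul {J z w : ℝ → ℝ} {β x₀ : ℝ} (hJ : ∀ x, 0 ≤ J x)
    (hJint : Integrable J) (hβ : 0 ≤ β) (hz : ∀ x, 0 ≤ z x)
    (hzβ : MemLp (fun x => z x ^ β) ∞) (hzβ1 : MemLp (fun x => z x ^ (β + 1)) ∞)
    (hw : MemLp w ∞) (hmax : ∀ x, w x ≤ w x₀) :
    z x₀ * nlOp J (fun y => z y ^ β * w y) x₀
        - (β / (β + 1)) * w x₀ * nlOp J (fun y => z y ^ (β + 1)) x₀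
      ≤ Az J z β x₀ * w x₀ := by
  have hI1 : Integrable fun y => J (x₀ - y) * (z y ^ β * w y - z x₀ ^ β * w x₀) :=
    integrable_kernel_mul hJint ((hw.mul' hzβ).sub (memLp_top_const _)) x₀
  have hI2 : Integrable fun y => J (x₀ - y) * (z y ^ (β + 1) - z x₀ ^ (β + 1)) :=
    integrable_kernel_mul hJint (hzβ1.sub (memLp_top_const _)) x₀
  have hI3 : Integrable fun y => J (x₀ - y) *
      (z x₀ * z y ^ β - β / (β + 1) * z y ^ (β + 1) - 1 / (β + 1) * z x₀ ^ (β + 1)) :=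
    integrable_kernel_mul hJint
      (((hzβ.const_mul _).sub (hzβ1.const_mul _)).sub (memLp_top_const _)) x₀
  rw [nlOp, nlOp, Az, ← integral_const_mul, ← integral_const_mul,
    ← integral_sub (hI1.const_mul _) (hI2.const_mul _), ← integral_mul_const]
  refine integral_mono ((hI1.const_mul _).sub (hI2.const_mul _)) (hI3.mul_const _) fun y => ?_
  have := mul_le_mul_of_nonneg_left
    (mul_sub_sub_le_mul_of_le hβ (hz x₀) (hz y) (hmax y)) (hJ (x₀ - y))
  linarith

theorem stmt0_general
    (J : ℝ → ℝ) (hJpos : ∀ x, 0 ≤ J x)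
    (hJint : Integrable J)
    (β : ℝ) (hβ : 0 ≤ β)
    (z : ℝ → ℝ) (hzmeas : Measurable z) (hzbdd : ∃ C, ∀ x, z x ≤ C)
    (hznonneg : ∀ x, 0 ≤ z x) :
    (∀ x, Az J z β x ≤ 0) ∧
    (∀ (w : ℝ → ℝ) (x₀ : ℝ), Continuous w → (∃ C, ∀ x, |w x| ≤ C) →
      (∀ x, w x ≤ w x₀) →
      z x₀ * nlOp J (fun y => z y ^ β * w y) x₀
          - (β / (β + 1)) * w x₀ * nlOp J (fun y => z y ^ (β + 1)) x₀
        ≤ Az J z β x₀ * w x₀) := by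
  obtain ⟨C, hzC⟩ := hzbdd
  refine ⟨Az_nonpos hJpos hβ hznonneg, fun w x₀ hwcont ⟨Cw, hwC⟩ hmax => ?_⟩
  exact mul_nlOp_sub_le_Az_mul hJpos hJint hβ hznonneg
    (memLp_top_rpow hzmeas hznonneg hzC hβ) (memLp_top_rpow hzmeas hznonneg hzC (by linarith))
    (memLp_top_of_bound hwcont.aestronglyMeasurable Cw (Eventually.of_forall hwC)) hmax

theorem stmt0
    (J : ℝ → ℝ) (hJpos : ∀ x, 0 ≤ J x) (hJeven : ∀ x, J (-x) = J x)
    (hJint : Integrable J) (hJmass : ∫ x, J x = 1)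
    (β : ℝ) (hβ : 0 ≤ β)
    (z : ℝ → ℝ) (hzmeas : Measurable z) (hzbdd : ∃ C, ∀ x, z x ≤ C)
    (hznonneg : ∀ x, 0 ≤ z x) :
    (∀ x, Az J z β x ≤ 0) ∧
    (∀ (w : ℝ → ℝ) (x₀ : ℝ), Continuous w → (∃ C, ∀ x, |w x| ≤ C) →
      (∀ x, w x ≤ w x₀) →
      z x₀ * nlOp J (fun y => z y ^ β * w y) x₀
          - (β / (β + 1)) * w x₀ * nlOp J (fun y => z y ^ (β + 1)) x₀
        ≤ Az J z β x₀ * w x₀) :=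
  stmt0_general J hJpos hJint β hβ z hzmeas hzbdd hznonneg
end

section
/- Let β ≥ 0, let z : ℝ → ℝ be a positive C² function and let w : ℝ → ℝ be a C² function that attains its global maximum at a point x₀ ∈ ℝ. Then z(x₀)·(z^β w)''(x₀) − (β/(β+1))·w(x₀)·(z^{β+1})''(x₀) ≤ −β·z(x₀)^{β−1}·z'(x₀)²·w(x₀). -/
/-!
At a maximum point `x₀` of `w` we have `w'(x₀) = 0` and `w''(x₀) ≤ 0`. Expanding both second
derivatives by the product and chain rules, the terms containing `z''` cancel exactly and the
left-hand side equals `-β z^{β-1} z'² w + z^{β+1} w''` at `x₀`; the last term is `≤ 0`.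
-/

open Filter Set Topology

theorem IsLocalMax.deriv_deriv_nonpos {f : ℝ → ℝ} {a : ℝ} (hmax : IsLocalMax f a)
    (hc : ContinuousAt f a) : deriv (deriv f) a ≤ 0 := by
  by_contra! hpos
  have hright : ∀ᶠ x in 𝓝[>] a, 0 < deriv f x :=
    deriv_pos_right_of_sign_deriv <| nhdsWithin_le_nhds <|
      eventually_nhdsWithin_sign_eq_of_deriv_pos hpos hmax.deriv_eq_zero
  obtain ⟨b, hab : a < b, hb⟩ := mem_nhdsGT_iff_exists_Ioo_subset.mp hright
  have hdiff : DifferentiableOn ℝ f (Ioo a b) := fun x hx =>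
    (differentiableAt_of_deriv_ne_zero (hb hx).ne').differentiableWithinAt
  have hcont : ContinuousOn f (Ico a b) :=
    Ioo_union_left hab ▸ hdiff.continuousOn.union_continuousAt isOpen_Ioo (by simpa using hc)
  have hmono : StrictMonoOn f (Ico a b) :=
    strictMonoOn_of_deriv_pos (convex_Ico a b) hcont (by simpa using fun x hx => hb hx)
  have hgt : ∀ᶠ x in 𝓝[>] a, f a < f x := by
    filter_upwards [Ioo_mem_nhdsGT hab] with x hx
    exact hmono (left_mem_Ico.2 hab) ⟨hx.1.le, hx.2⟩ hx.1
  obtain ⟨x, hlt, hle⟩ := (hgt.and (hmax.filter_mono nhdsWithin_le_nhds)).exists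
  exact hlt.not_ge hle

theorem hasDerivAt_deriv_mul {u w : ℝ → ℝ} {u'' w'' x : ℝ} (hu : Differentiable ℝ u)
    (hw : Differentiable ℝ w) (hu' : HasDerivAt (deriv u) u'' x)
    (hw' : HasDerivAt (deriv w) w'' x) :
    HasDerivAt (deriv fun y => u y * w y)
      (u'' * w x + 2 * deriv u x * deriv w x + u x * w'') x := by
  have h : deriv (fun y => u y * w y) = fun y => deriv u y * w y + u y * deriv w y :=
    funext fun y => deriv_mul (hu y) (hw y)
  rw [h]
  refine ((hu'.mul (hw x).hasDerivAt).add ((hu x).hasDerivAt.mul hw')).congr_deriv ?_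
  ring

theorem hasDerivAt_deriv_rpow_const {z : ℝ → ℝ} {z'' x : ℝ} (p : ℝ)
    (hz : Differentiable ℝ z) (hz0 : ∀ y, z y ≠ 0) (hz' : HasDerivAt (deriv z) z'' x) :
    HasDerivAt (deriv fun y => z y ^ p)
      (p * z x ^ (p - 1) * z'' + p * (p - 1) * z x ^ (p - 2) * deriv z x ^ 2) x := by
  have h : deriv (fun y => z y ^ p) = fun y => deriv z y * p * z y ^ (p - 1) :=
    funext fun y => deriv_rpow_const (hz y) (Or.inl (hz0 y))
  rw [h]
  refine ((hz'.mul_const p).mul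
    ((hz x).hasDerivAt.rpow_const (p := p - 1) (Or.inl (hz0 x)))).congr_deriv ?_
  rw [show p - 1 - 1 = p - 2 by ring]
  ring

theorem stmt2
    (β : ℝ) (hβ : 0 ≤ β)
    (z w : ℝ → ℝ) (hz : ContDiff ℝ 2 z) (hzpos : ∀ x, 0 < z x)
    (hw : ContDiff ℝ 2 w)
    (x₀ : ℝ) (hmax : ∀ x, w x ≤ w x₀) :
    z x₀ * deriv (deriv (fun x => z x ^ β * w x)) x₀
        - (β / (β + 1)) * w x₀ * deriv (deriv (fun x => z x ^ (β + 1))) x₀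
      ≤ -(β * z x₀ ^ (β - 1) * (deriv z x₀) ^ 2 * w x₀) := by
  have hzd : Differentiable ℝ z := hz.differentiable two_ne_zero
  have hz0 : ∀ x, z x ≠ 0 := fun x => (hzpos x).ne'
  have hz'' := (hz.differentiable_deriv_two x₀).hasDerivAt
  have hlocmax : IsLocalMax w x₀ := Eventually.of_forall hmax
  have hprod := hasDerivAt_deriv_mul (hzd.rpow_const fun x => Or.inl (hz0 x))
    (hw.differentiable two_ne_zero) (hasDerivAt_deriv_rpow_const β hzd hz0 hz'')
    (hw.differentiable_deriv_two x₀).hasDerivAt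
  rw [hprod.deriv, (hasDerivAt_deriv_rpow_const (β + 1) hzd hz0 hz'').deriv,
    hlocmax.deriv_eq_zero]
  have hw'' : deriv (deriv w) x₀ ≤ 0 := hlocmax.deriv_deriv_nonpos hw.continuous.continuousAt
  set a := z x₀
  have ha : 0 < a := hzpos x₀
  calc _ = -(β * a ^ (β - 1) * deriv z x₀ ^ 2 * w x₀)
          + a ^ (β + 1) * deriv (deriv w) x₀ := by
        have hβ1 : β + 1 ≠ 0 := by positivity
        have h1 : a ^ (β - 1) = a ^ (β - 2) * a := by
          rw [← Real.rpow_add_one ha.ne']; ring_nf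
        have h0 : a ^ β = a ^ (β - 2) * a * a := by
          rw [← h1, ← Real.rpow_add_one ha.ne']; ring_nf
        rw [add_sub_cancel_right, show β + 1 - 2 = β - 1 by ring, Real.rpow_add_one ha.ne', h0,
          h1]
        field_simp
        ring
    _ ≤ _ := by
        linarith [mul_nonpos_of_nonneg_of_nonpos (by positivity : 0 ≤ a ^ (β + 1)) hw'']
end

section
/- For every v ∈ L¹(ℝ), ∫_ℝ ((J∗v)(x) − v(x)) · 1_{\{v(x) > 0\}} dx ≤ 0, where 1_{\{v>0\}} is the indicator function of the set where v is positive. -/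
/-!
On `{v > 0}` we have `v = v⁺`, and `J ⋆ v ≤ J ⋆ v⁺` because `J ≥ 0`; off that set the integrand
vanishes while `J ⋆ v⁺ ≥ 0`. Hence the integrand is dominated by `J ⋆ v⁺ - v⁺`, whose integral is
`(∫ J - 1) ∫ v⁺ = 0` by Fubini.
-/

open MeasureTheory ContinuousLinearMap
open scoped Convolution

namespace MeasureTheory

variable {G : Type*} [MeasurableSpace G] {μ : Measure G}

theorem convolution_nonneg [Sub G] {f g : G → ℝ} (hf : ∀ x, 0 ≤ f x) (hg : ∀ x, 0 ≤ g x)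
    (x : G) : 0 ≤ (f ⋆[lsmul ℝ ℝ, μ] g) x :=
  integral_nonneg fun t => mul_nonneg (hf t) (hg (x - t))

theorem indicator_pos_convolution_sub_le [AddGroup G] {J v : G → ℝ} {x : G}
    (hJ : ∀ x, 0 ≤ J x)
    (hJv : ConvolutionExistsAt J (fun y => max (v y) 0) x (lsmul ℝ ℝ) μ) :
    {y | 0 < v y}.indicator (J ⋆[lsmul ℝ ℝ, μ] v - v) x ≤
      (J ⋆[lsmul ℝ ℝ, μ] fun y => max (v y) 0) x - max (v x) 0 := by
  by_cases hvx : 0 < v x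
  · rw [Set.indicator_of_mem (show x ∈ {y | 0 < v y} from hvx), Pi.sub_apply, max_eq_left hvx.le]
    exact sub_le_sub_right (convolution_mono_right_of_nonneg hJv hJ
      (fun y => le_max_left _ _) fun y => le_max_right _ _) _
  · rw [Set.indicator_of_notMem (show x ∉ {y | 0 < v y} from hvx),
      max_eq_right (not_lt.mp hvx), sub_zero]
    exact convolution_nonneg hJ (fun y => le_max_right _ _) x

variable [AddGroup G] [MeasurableAdd₂ G] [MeasurableNeg G] [SFinite μ] [μ.IsAddRightInvariant]

theorem integral_convolution_of_integral_eq_one {E : Type*} [NormedAddCommGroup E]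
    [NormedSpace ℝ E] [CompleteSpace E] {J : G → ℝ} {f : G → E} (hJ : Integrable J μ)
    (hJ₁ : ∫ x, J x ∂μ = 1) (hf : Integrable f μ) :
    ∫ x, (J ⋆[lsmul ℝ ℝ, μ] f) x ∂μ = ∫ x, f x ∂μ := by
  rw [integral_convolution _ hJ hf, hJ₁, lsmul_apply, one_smul]

theorem integral_indicator_pos_convolution_sub_nonpos {J v : G → ℝ} (hJ : ∀ x, 0 ≤ J x)
    (hJint : Integrable J μ) (hJ₁ : ∫ x, J x ∂μ = 1) (hv : Integrable v μ) :
    ∫ x, {y | 0 < v y}.indicator (J ⋆[lsmul ℝ ℝ, μ] v - v) x ∂μ ≤ 0 := by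
  have hvp : Integrable (fun y => max (v y) 0) μ := hv.pos_part
  have hpos : NullMeasurableSet {y | 0 < v y} μ :=
    nullMeasurableSet_lt aemeasurable_const hv.aemeasurable
  have hint : Integrable ({y | 0 < v y}.indicator (J ⋆[lsmul ℝ ℝ, μ] v - v)) μ :=
    ((hJint.integrable_convolution _ hv).sub hv).indicator₀ hpos
  have hdom : ∀ᵐ x ∂μ, {y | 0 < v y}.indicator (J ⋆[lsmul ℝ ℝ, μ] v - v) x ≤
      (J ⋆[lsmul ℝ ℝ, μ] fun y => max (v y) 0) x - max (v x) 0 := by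
    filter_upwards [hJint.ae_convolution_exists (lsmul ℝ ℝ) hvp] with x hx
    exact indicator_pos_convolution_sub_le hJ hx
  calc ∫ x, {y | 0 < v y}.indicator (J ⋆[lsmul ℝ ℝ, μ] v - v) x ∂μ
      ≤ ∫ x, (J ⋆[lsmul ℝ ℝ, μ] fun y => max (v y) 0) x - max (v x) 0 ∂μ :=
        integral_mono_ae hint ((hJint.integrable_convolution _ hvp).sub hvp) hdom
    _ = 0 := by
      rw [integral_sub (hJint.integrable_convolution _ hvp) hvp,
        integral_convolution_of_integral_eq_one hJint hJ₁ hvp, sub_self]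

end MeasureTheory

theorem stmt7_general
    (J : ℝ → ℝ) (hJpos : ∀ x, 0 ≤ J x)
    (hJint : Integrable J) (hJmass : ∫ x, J x = 1)
    (v : ℝ → ℝ) (hv : Integrable v) :
    (∫ x, ((∫ y, J (x - y) * v y) - v x) * Set.indicator {x : ℝ | 0 < v x} 1 x) ≤ 0 := by
  have hintegrand : ∀ x,
      ((∫ y, J (x - y) * v y) - v x) * Set.indicator {x : ℝ | 0 < v x} 1 x =
        {y | 0 < v y}.indicator (J ⋆ v - v) x := by
    intro x
    by_cases hvx : 0 < v x <;> simp [hvx, convolution_lsmul_swap]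
  simp_rw [hintegrand]
  exact integral_indicator_pos_convolution_sub_nonpos hJpos hJint hJmass hv

theorem stmt7
    (J : ℝ → ℝ) (hJpos : ∀ x, 0 ≤ J x) (hJeven : ∀ x, J (-x) = J x)
    (hJint : Integrable J) (hJmass : ∫ x, J x = 1)
    (v : ℝ → ℝ) (hv : Integrable v) :
    (∫ x, ((∫ y, J (x - y) * v y) - v x) * Set.indicator {x : ℝ | 0 < v x} 1 x) ≤ 0 :=
  stmt7_general J hJpos hJint hJmass v hv
end

section
/- Let W : (0,∞) → ℝ be locally absolutely continuous and suppose that its positive part W⁺ = max(W,0) (which is also locally absolutely continuous) satisfies (W⁺)'(t) + (W⁺(t))² ≤ 0 for almost every t > 0. Then W(t) ≤ 1/t for every t > 0. -/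
set_option maxHeartbeats 1000000


open MeasureTheory Filter

theorem stmt10
    (W Wp : ℝ → ℝ) (hWp : Wp = fun t => max (W t) 0)
    -- W is locally absolutely continuous on (0,∞):
    (hWac : ∀ a b : ℝ, 0 < a → a ≤ b →
      IntegrableOn (deriv W) (Set.Icc a b) ∧ W b - W a = ∫ t in a..b, deriv W t)
    -- W⁺ is locally absolutely continuous on (0,∞):
    (hWpac : ∀ a b : ℝ, 0 < a → a ≤ b →
      IntegrableOn (deriv Wp) (Set.Icc a b) ∧ Wp b - Wp a = ∫ t in a..b, deriv Wp t)
    -- the differential inequality (W⁺)'(t) + (W⁺(t))² ≤ 0 for a.e. t > 0: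
    (hode : ∀ᵐ t ∂(volume : Measure ℝ), 0 < t → deriv Wp t + (Wp t) ^ 2 ≤ 0) :
    ∀ t : ℝ, 0 < t → W t ≤ 1 / t := by
  have hWpnn : ∀ t, 0 ≤ Wp t := fun t => by rw [hWp]; exact le_max_right _ _
  have hWle : ∀ t, W t ≤ Wp t := fun t => by rw [hWp]; exact le_max_left _ _
  have hint : ∀ a b : ℝ, 0 < a → a ≤ b → IntervalIntegrable (deriv Wp) volume a b := by
    intro a b ha hab
    exact ((hWpac a b ha hab).1.mono_set (by rw [Set.uIcc_of_le hab])).intervalIntegrable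
  -- monotonicity of Wp on (0, ∞)
  have hmono : ∀ a b : ℝ, 0 < a → a ≤ b → Wp b ≤ Wp a := by
    intro a b ha hab
    have h1 := (hWpac a b ha hab).2
    have h2 : (∫ t in a..b, deriv Wp t) ≤ ∫ _t in a..b, (0:ℝ) := by
      apply intervalIntegral.integral_mono_ae_restrict hab (hint a b ha hab)
        intervalIntegrable_const
      filter_upwards [ae_restrict_of_ae hode, ae_restrict_mem measurableSet_Icc] with t h3 h4
      have ht : 0 < t := lt_of_lt_of_le ha h4.1
      have := h3 ht
      nlinarith [sq_nonneg (Wp t)]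
    simp only [intervalIntegral.integral_const, smul_zero] at h2
    linarith [h1 ▸ h2]
  -- quantitative step inequality
  have hstep : ∀ a b : ℝ, 0 < a → a ≤ b → Wp b + (b - a) * (Wp b)^2 ≤ Wp a := by
    intro a b ha hab
    have h1 := (hWpac a b ha hab).2
    have h2 : (∫ t in a..b, deriv Wp t) ≤ ∫ _t in a..b, (-(Wp b)^2) := by
      apply intervalIntegral.integral_mono_ae_restrict hab (hint a b ha hab)
        intervalIntegrable_const
      filter_upwards [ae_restrict_of_ae hode, ae_restrict_mem measurableSet_Icc] with t h3 h4
      have ht : 0 < t := lt_of_lt_of_le ha h4.1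
      have h5 := h3 ht
      have h6 : Wp b ≤ Wp t := hmono t b ht h4.2
      nlinarith [hWpnn b]
    rw [intervalIntegral.integral_const, smul_eq_mul] at h2
    nlinarith [h1 ▸ h2]
  intro t₀ ht₀
  refine le_trans (hWle t₀) ?_
  by_contra hcon
  push_neg at hcon
  set M := Wp t₀ with hMdef
  have hM : 0 < M := lt_of_le_of_lt (by positivity) hcon
  have hMt : 1 / M < t₀ := by
    rw [div_lt_iff₀ hM]
    rw [div_lt_iff₀ ht₀] at hcon
    nlinarith
  set T : ℝ := (1 / M + t₀) / 2 with hTdef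
  have hT1 : 1 / M < T := by rw [hTdef]; linarith
  have hT2 : T < t₀ := by rw [hTdef]; linarith
  have hT0 : 0 < T := lt_trans (by positivity) hT1
  set K := Wp (t₀ - T) with hKdef
  have hKM : M ≤ K := hmono (t₀ - T) t₀ (by linarith) (by linarith)
  have hK : 0 < K := lt_of_lt_of_le hM hKM
  have hTM : 0 < T * M - 1 := by
    rw [div_lt_iff₀ hM] at hT1; linarith
  obtain ⟨n₀, hn₀⟩ := exists_nat_gt (T * K / (T * M - 1))
  set n : ℕ := n₀ + 1 with hndef
  have hn : T * K / (T * M - 1) < (n : ℝ) := by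
    refine lt_of_lt_of_le hn₀ ?_
    exact_mod_cast Nat.le_succ n₀
  have hnpos : 0 < (n : ℝ) := by positivity
  set h : ℝ := T / n with hhdef
  have hh : 0 < h := by positivity
  have hnh : (n : ℝ) * h = T := by rw [hhdef]; field_simp
  set c : ℝ := h / (1 + h * K) with hcdef
  have hden : 0 < 1 + h * K := by positivity
  have hc : 0 < c := by positivity
  -- key induction
  have key : ∀ k : ℕ, k ≤ n → (Wp (t₀ - k * h))⁻¹ ≤ 1 / M - k * c := by
    intro k hk
    induction k with
    | zero =>
      simp only [Nat.cast_zero, zero_mul, sub_zero, one_div, ← hMdef, le_refl]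
    | succ k ih =>
      have hk' : k ≤ n := Nat.le_of_succ_le hk
      have IH := ih hk'
      have hkR : (k : ℝ) ≤ n := by exact_mod_cast hk'
      have hk1R : (k : ℝ) + 1 ≤ n := by exact_mod_cast hk
      have hkh : (k : ℝ) * h ≤ T := by nlinarith
      have hkh1 : ((k : ℝ) + 1) * h ≤ T := by nlinarith
      push_cast
      set a : ℝ := t₀ - ((k : ℝ) + 1) * h with hadef
      set b : ℝ := t₀ - (k : ℝ) * h with hbdef
      have ha : 0 < a := by rw [hadef]; linarith
      have hab : a ≤ b := by rw [hadef, hbdef]; nlinarith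
      have hbt : b ≤ t₀ := by
        rw [hbdef]
        nlinarith [(Nat.cast_nonneg k : (0:ℝ) ≤ k)]
      have hub : M ≤ Wp b := hmono b t₀ (lt_of_lt_of_le ha hab) hbt
      have hu0 : 0 < Wp b := lt_of_lt_of_le hM hub
      have huK : Wp b ≤ K := hmono (t₀ - T) b (by linarith) (by rw [hbdef]; linarith)
      have hstepab := hstep a b ha hab
      have hba : b - a = h := by rw [hadef, hbdef]; ring
      rw [hba] at hstepab
      have hq : 0 < Wp b + h * Wp b ^ 2 := by nlinarith
      have h1 : (Wp a)⁻¹ ≤ (Wp b + h * Wp b ^ 2)⁻¹ := inv_anti₀ hq hstepab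
      have hdenb : 0 < 1 + h * Wp b := by nlinarith
      have h2 : (Wp b + h * Wp b ^ 2)⁻¹ = (Wp b)⁻¹ - h / (1 + h * Wp b) := by
        field_simp
        ring
      have h3 : c ≤ h / (1 + h * Wp b) := by
        rw [hcdef]
        exact div_le_div_of_nonneg_left hh.le hdenb (by nlinarith)
      rw [h2] at h1
      have hexp : ((k : ℝ) + 1) * c = (k : ℝ) * c + c := by ring
      rw [hexp]
      linarith
  have final := key n le_rfl
  rw [hnh] at final
  have hnc : (n : ℝ) * c = T / (1 + h * K) := by
    rw [hcdef, ← mul_div_assoc, hnh]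
  have h5 : h * K < T * M - 1 := by
    rw [div_lt_iff₀ hTM] at hn
    rw [hhdef, div_mul_eq_mul_div, div_lt_iff₀ hnpos]
    nlinarith
  have h6 : 1 / M < (n : ℝ) * c := by
    rw [hnc, div_lt_div_iff₀ hM hden]
    nlinarith
  have hfin : (0:ℝ) < K⁻¹ := by positivity
  linarith
end
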